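/- arXiv:2602.21738 — 5 statements merged into one kernel-verified Lean document; each statement's English description precedes it below -/
import Mathlib

section
/- Let R, P, Q be real M×M matrices with P and Q symmetric positive definite and P·R + Rᵀ·P = Q. Then every complex eigenvalue of R (root of its characteristic polynomial over ℂ) has strictly positive real part. -/
/-!
If `R *ᵥ v = μ • v` with `v ≠ 0` over `ℂ`, the Lyapunov equation gives
`vᴴ Q v = (μ + conj μ) · vᴴ P v = 2 Re μ · vᴴ P v`. The complexifications of `P` and `Q` are
positive definite (the quadratic form of a real symmetric matrix at `a + i b` is the sum of its
values at `a` and `b`), so both forms are positive and `Re μ > 0`.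
-/

open Matrix
open scoped ComplexOrder

namespace Matrix

variable {m n 𝕜 : Type*} [RCLike 𝕜]

theorem conjTranspose_map_algebraMap (A : Matrix m n ℝ) :
    (A.map (algebraMap ℝ 𝕜))ᴴ = Aᵀ.map (algebraMap ℝ 𝕜) := by
  rw [← conjTranspose_map _ fun x => (RCLike.conj_ofReal x).symm,
    conjTranspose_eq_transpose_of_trivial]

variable [Fintype n]

theorem star_dotProduct_mulVec_eq_of_lyapunov {α : Type*} [CommSemiring α] [StarRing α]
    {A P Q : Matrix n n α} (hLyap : P * A + Aᴴ * P = Q) {μ : α} {v : n → α}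
    (hv : A *ᵥ v = μ • v) :
    star v ⬝ᵥ Q *ᵥ v = (μ + star μ) * (star v ⬝ᵥ P *ᵥ v) := by
  have hstar : star v ᵥ* Aᴴ = star μ • star v := by rw [← star_mulVec, hv, star_smul]
  rw [← hLyap, add_mulVec, dotProduct_add, ← mulVec_mulVec, hv, mulVec_smul, dotProduct_smul,
    ← mulVec_mulVec, dotProduct_mulVec (star v) Aᴴ, hstar, smul_dotProduct, smul_eq_mul,
    smul_eq_mul, add_mul]

theorem re_pos_of_hasEigenvalue_of_lyapunov [DecidableEq n] {A P Q : Matrix n n 𝕜}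
    (hP : P.PosDef) (hQ : Q.PosDef) (hLyap : P * A + Aᴴ * P = Q) {μ : 𝕜}
    (hμ : Module.End.HasEigenvalue (toLin' A) μ) :
    0 < RCLike.re μ := by
  obtain ⟨v, hv⟩ := hμ.exists_hasEigenvector
  have hAv : A *ᵥ v = μ • v := by simpa using hv.apply_eq_smul
  have hre := congrArg RCLike.re (star_dotProduct_mulVec_eq_of_lyapunov hLyap hAv)
  rw [RCLike.star_def, RCLike.add_conj, ← RCLike.ofReal_ofNat, ← RCLike.ofReal_mul,
    RCLike.re_ofReal_mul] at hre
  have hQv := hQ.re_dotProduct_pos hv.2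
  rw [hre] at hQv
  have h2μ := pos_of_mul_pos_left hQv (hP.re_dotProduct_pos hv.2).le
  linarith

theorem re_star_dotProduct_map_mulVec (S : Matrix n n ℝ) (x : n → 𝕜) :
    RCLike.re (star x ⬝ᵥ S.map (algebraMap ℝ 𝕜) *ᵥ x) =
      (fun i => RCLike.re (x i)) ⬝ᵥ S *ᵥ (fun i => RCLike.re (x i)) +
        (fun i => RCLike.im (x i)) ⬝ᵥ S *ᵥ (fun i => RCLike.im (x i)) := by
  simp only [dotProduct, mulVec, map_apply, Pi.star_apply, map_sum, Finset.mul_sum,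
    RCLike.mul_re, RCLike.star_def, RCLike.conj_re, RCLike.conj_im, RCLike.algebraMap_eq_ofReal,
    RCLike.ofReal_re, RCLike.ofReal_im, RCLike.im_ofReal_mul, ← Finset.sum_add_distrib]
  refine Finset.sum_congr rfl fun i _ => Finset.sum_congr rfl fun j _ => ?_
  ring

theorem PosDef.map_algebraMap {S : Matrix n n ℝ} (hS : S.PosDef) :
    (S.map (algebraMap ℝ 𝕜)).PosDef := by
  have hherm : (S.map (algebraMap ℝ 𝕜)).IsHermitian := by
    rw [IsHermitian, conjTranspose_map_algebraMap, ← conjTranspose_eq_transpose_of_trivial,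
      hS.1.eq]
  refine .of_dotProduct_mulVec_pos hherm fun x hx => RCLike.pos_iff.2
    ⟨?_, hherm.im_star_dotProduct_mulVec_self x⟩
  rw [re_star_dotProduct_map_mulVec]
  set a : n → ℝ := fun i => RCLike.re (x i)
  set b : n → ℝ := fun i => RCLike.im (x i)
  have hpos {y : n → ℝ} (hy : y ≠ 0) : 0 < y ⬝ᵥ S *ᵥ y := by
    simpa using hS.dotProduct_mulVec_pos hy
  have hnonneg (y : n → ℝ) : 0 ≤ y ⬝ᵥ S *ᵥ y := by
    simpa using hS.posSemidef.dotProduct_mulVec_nonneg y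
  by_cases ha : a = 0
  · have hb : b ≠ 0 := fun hb =>
      hx (funext fun i => RCLike.ext (by simpa using congrFun ha i) (by simpa using congrFun hb i))
    linarith [hnonneg a, hpos hb]
  · linarith [hpos ha, hnonneg b]

end Matrix

/-- Converse Lyapunov implication: if `P, Q` are symmetric positive definite and
`P * R + Rᵀ * P = Q`, then all complex eigenvalues of `R` have positive real part. -/
theorem stmt_1 (M : ℕ) (R P Q : Matrix (Fin M) (Fin M) ℝ)
    (hP : P.PosDef) (hQ : Q.PosDef) (hLyap : P * R + Rᵀ * P = Q) :
    ∀ μ : ℂ, ((R.map (algebraMap ℝ ℂ)).charpoly).IsRoot μ → 0 < μ.re := by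
  intro μ hroot
  have hLyapℂ : P.map (algebraMap ℝ ℂ) * R.map (algebraMap ℝ ℂ) +
      (R.map (algebraMap ℝ ℂ))ᴴ * P.map (algebraMap ℝ ℂ) = Q.map (algebraMap ℝ ℂ) := by
    rw [conjTranspose_map_algebraMap]
    simpa only [map_add, map_mul, RingHom.mapMatrix_apply] using
      congrArg (algebraMap ℝ ℂ).mapMatrix hLyap
  rw [← charpoly_toLin', ← Module.End.hasEigenvalue_iff_isRoot_charpoly] at hroot
  exact re_pos_of_hasEigenvalue_of_lyapunov hP.map_algebraMap hQ.map_algebraMap hLyapℂ hroot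
end

section
/- Let L be a complex M×M matrix, let U be an invertible complex M×M matrix, and suppose U⁻¹·L·U is the block-diagonal matrix diag(0_ξ, J), where 0_ξ is the ξ×ξ zero matrix and J is an (M−ξ)×(M−ξ) complex matrix all of whose eigenvalues have strictly positive real part. For i = 1,…,ξ let v_{rᵢ} be the i-th column of U and let v_{lᵢ}ᵀ be the i-th row of U⁻¹, and let α₁,…,α_ξ be strictly positive reals. Then every eigenvalue of L + Σᵢ₌₁^ξ αᵢ · v_{rᵢ} · v_{lᵢ}ᵀ has strictly positive real part. -/
open Matrix Polynomial

lemma charpoly_conj_aux {n : Type*} [DecidableEq n] [Fintype n]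
    (U A : Matrix n n ℂ) (hU : IsUnit U) :
    (U⁻¹ * A * U).charpoly = A.charpoly := by
  have hdet : IsUnit U.det := (isUnit_iff_isUnit_det U).mp hU
  have h1 : U⁻¹ * U = 1 := nonsing_inv_mul U hdet
  have hmap : (U⁻¹.map C) * (U.map C) = 1 := by
    rw [← Matrix.map_mul, h1, Matrix.map_one _ (map_zero C) (map_one C)]
  have key : charmatrix (U⁻¹ * A * U) = (U⁻¹.map C) * charmatrix A * (U.map C) := by
    unfold charmatrix
    rw [Matrix.mul_sub, Matrix.sub_mul]
    congr 1
    · rw [← (scalar_commute (X:ℂ[X]) (Commute.all X) (U⁻¹.map C)).eq, Matrix.mul_assoc, hmap,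
        Matrix.mul_one]
    · simp only [RingHom.mapMatrix_apply, ← Matrix.map_mul, Matrix.mul_assoc]
  have h3 : ((U⁻¹).map C).det * ((U).map C).det = 1 := by
    rw [← det_mul, hmap, det_one]
  have : (U⁻¹.map C).det * A.charmatrix.det * (U.map C).det =
      A.charmatrix.det * ((U⁻¹.map C).det * (U.map C).det) := by ring
  rw [Matrix.charpoly, key, det_mul, det_mul, this, h3, mul_one, Matrix.charpoly]

lemma charpoly_diagonal' {n : Type*} [DecidableEq n] [Fintype n] (d : n → ℂ) :
    (Matrix.diagonal d).charpoly = ∏ i, (X - C (d i)) := by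
  have : charmatrix (Matrix.diagonal d) = Matrix.diagonal (fun i => X - C (d i)) := by
    ext i j
    by_cases h : i = j <;> simp [charmatrix, diagonal, h]
  rw [Matrix.charpoly, this, det_diagonal]

/-- Spectral shift: if `U⁻¹ * L * U = fromBlocks 0 0 0 J` with all eigenvalues of `J`
having positive real part, and `v_{rᵢ}` (resp. `v_{lᵢ}ᵀ`) are the first `ξ` columns of `U`
(resp. rows of `U⁻¹`), then all eigenvalues of `L + ∑ i, αᵢ • v_{rᵢ} v_{lᵢ}ᵀ` have positive
real part, for any positive reals `αᵢ`. Here the `M×M` matrices are indexed by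
`Fin ξ ⊕ Fin K` (so `M = ξ + K`). -/
theorem stmt_3 (ξ K : ℕ)
    (L U : Matrix (Fin ξ ⊕ Fin K) (Fin ξ ⊕ Fin K) ℂ)
    (hU : IsUnit U)
    (J : Matrix (Fin K) (Fin K) ℂ)
    (hblock : U⁻¹ * L * U = Matrix.fromBlocks 0 0 0 J)
    (hJ : ∀ μ : ℂ, J.charpoly.IsRoot μ → 0 < μ.re)
    (vr vl : Fin ξ → (Fin ξ ⊕ Fin K) → ℂ)
    (hvr : ∀ i j, vr i j = U j (Sum.inl i))
    (hvl : ∀ i j, vl i j = U⁻¹ (Sum.inl i) j)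
    (α : Fin ξ → ℝ) (hα : ∀ i, 0 < α i) :
    ∀ μ : ℂ,
      ((L + ∑ i : Fin ξ, (α i : ℂ) • Matrix.vecMulVec (vr i) (vl i)).charpoly).IsRoot μ →
        0 < μ.re := by
  intro μ hroot
  have hdet : IsUnit U.det := (isUnit_iff_isUnit_det U).mp hU
  have h1 : U⁻¹ * U = 1 := nonsing_inv_mul U hdet
  set S := ∑ i : Fin ξ, (α i : ℂ) • Matrix.vecMulVec (vr i) (vl i) with hS
  have hconjS : U⁻¹ * S * U = Matrix.fromBlocks (Matrix.diagonal (fun i => (α i : ℂ))) 0 0 0 := by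
    have hterm : ∀ i : Fin ξ, Matrix.vecMulVec (vr i) (vl i) =
        U * Matrix.single (Sum.inl i) (Sum.inl i) 1 * U⁻¹ := by
      intro i
      ext p q
      simp [Matrix.mul_apply, Matrix.vecMulVec_apply, hvr, hvl,
        Matrix.single, ite_and, Finset.sum_ite_eq, Finset.mul_sum, Finset.sum_mul]
    rw [hS, Finset.mul_sum, Finset.sum_mul]
    have hmain : ∀ i : Fin ξ, U⁻¹ * ((α i : ℂ) • Matrix.vecMulVec (vr i) (vl i)) * U =
        (α i : ℂ) • Matrix.single (Sum.inl i) (Sum.inl i) (1:ℂ) := by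
      intro i
      rw [hterm i, Matrix.mul_smul, Matrix.smul_mul]
      congr 1
      have : U⁻¹ * (U * Matrix.single (Sum.inl i) (Sum.inl i) 1 * U⁻¹) * U
          = U⁻¹ * U * (Matrix.single (Sum.inl i) (Sum.inl i) 1 * (U⁻¹ * U)) := by
        simp only [Matrix.mul_assoc]
      rw [this, h1, Matrix.one_mul, Matrix.mul_one]
    simp only [hmain]
    ext p q
    rcases p with p | p <;> rcases q with q | q <;>
      simp [Matrix.single, Matrix.diagonal, Matrix.sum_apply, ite_and,
        smul_ite, Finset.sum_ite_eq, Finset.sum_ite_eq', eq_comm]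
  have hconj : U⁻¹ * (L + S) * U =
      Matrix.fromBlocks (Matrix.diagonal (fun i => (α i : ℂ))) 0 0 J := by
    rw [Matrix.mul_add, Matrix.add_mul, hblock, hconjS, Matrix.fromBlocks_add]
    simp
  have hcp : (L + S).charpoly =
      (Matrix.diagonal (fun i => (α i : ℂ))).charpoly * J.charpoly := by
    rw [← charpoly_conj_aux U (L + S) hU, hconj, Matrix.charpoly_fromBlocks_zero₂₁]
  rw [hcp, charpoly_diagonal'] at hroot
  simp only [Polynomial.IsRoot, Polynomial.eval_mul, Polynomial.eval_prod,
    Polynomial.eval_sub, Polynomial.eval_X, Polynomial.eval_C, mul_eq_zero,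
    Finset.prod_eq_zero_iff, sub_eq_zero] at hroot
  rcases hroot with ⟨i, _, hi⟩ | h
  · rw [hi]; simpa using hα i
  · exact hJ μ h
end

section
/- Let L be a real M×M matrix, U an invertible complex M×M matrix with U⁻¹·L·U = diag(0_{ξ+1}, J) where 0_{ξ+1} is the (ξ+1)×(ξ+1) zero matrix and J is any complex square matrix. For i = 1,…,ξ let v_{rᵢ} be the i-th column of U, v_{lᵢ}ᵀ the i-th row of U⁻¹ (assumed real), and let α₁,…,α_ξ > 0. Then R := L + Σᵢ₌₁^ξ αᵢ·v_{rᵢ}·v_{lᵢ}ᵀ is singular, and consequently for every symmetric positive definite real Q there is no real matrix P satisfying P·L + Lᵀ·P = Q − Σᵢ₌₁^ξ αᵢ·(P·v_{rᵢ}·v_{lᵢ}ᵀ + v_{lᵢ}·v_{rᵢ}ᵀ·P). -/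
open Matrix

/-!
The `(ξ+1)`-th column `u` of `U` lies in the zero block, so `L u = 0`; and since `U⁻¹ U = 1`,
each of the first `ξ` rows `v_{lᵢ}ᵀ` of `U⁻¹` annihilates `u`. The rank-one corrections only
see these `ξ` rows, so `R u = 0` and the real matrix `R` is singular. For a real `x ≠ 0` with
`R x = 0`, any solution of `P R + Rᵀ P = Q` would give `xᵀ Q x = 0`, contradicting `Q > 0`.
-/

namespace Matrix

variable {ι n 𝕜 : Type*} [Fintype ι]

theorem map_add_sum_smul_vecMulVec {𝕜' : Type*} [CommRing 𝕜] [CommRing 𝕜']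
    (f : 𝕜 →+* 𝕜') (A : Matrix n n 𝕜) (c : ι → 𝕜) (r w : ι → n → 𝕜) :
    (A + ∑ i, c i • vecMulVec (r i) (w i)).map f =
      A.map f + ∑ i, f (c i) • vecMulVec (f ∘ r i) (f ∘ w i) := by
  ext j k
  simp [sum_apply, vecMulVec_apply]

variable [Fintype n]

theorem add_sum_smul_vecMulVec_mulVec_eq_zero [CommRing 𝕜] {A : Matrix n n 𝕜}
    {u : n → 𝕜} (c : ι → 𝕜) (r w : ι → n → 𝕜) (hA : A *ᵥ u = 0) (hw : ∀ i, w i ⬝ᵥ u = 0) :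
    (A + ∑ i, c i • vecMulVec (r i) (w i)) *ᵥ u = 0 := by
  simp [add_mulVec, sum_mulVec, smul_mulVec, vecMulVec_mulVec, hA, hw]

theorem mul_add_transpose_mul_eq_sub_iff [CommRing 𝕜] (P A Q : Matrix n n 𝕜) (c : ι → 𝕜)
    (r w : ι → n → 𝕜) :
    P * A + Aᵀ * P =
        Q - ∑ i, c i • (P * vecMulVec (r i) (w i) + vecMulVec (w i) (r i) * P) ↔
      P * (A + ∑ i, c i • vecMulVec (r i) (w i)) +
        (A + ∑ i, c i • vecMulVec (r i) (w i))ᵀ * P = Q := by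
  rw [eq_sub_iff_add_eq]
  convert Iff.rfl using 2
  simp only [mul_add, add_mul, transpose_add, transpose_sum, transpose_smul, transpose_vecMulVec,
    Finset.mul_sum, Finset.sum_mul, Matrix.mul_smul, smul_mul, smul_add, Finset.sum_add_distrib]
  abel

theorem mul_add_conjTranspose_mul_ne_of_mulVec_eq_zero [CommRing 𝕜] [PartialOrder 𝕜]
    [StarRing 𝕜] {R Q : Matrix n n 𝕜} (hQ : Q.PosDef) {x : n → 𝕜} (hx : x ≠ 0)
    (hRx : R *ᵥ x = 0) (P : Matrix n n 𝕜) : P * R + Rᴴ * P ≠ Q := by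
  rintro rfl
  have hpos := hQ.dotProduct_mulVec_pos hx
  rw [add_mulVec, ← mulVec_mulVec, ← mulVec_mulVec, hRx, dotProduct_add,
    dotProduct_mulVec _ Rᴴ, ← star_mulVec, hRx] at hpos
  simp at hpos

variable [DecidableEq n]

theorem exists_mulVec_eq_zero_of_map {K L : Type*} [Field K] [Field L] (f : K →+* L)
    {A : Matrix n n K} {v : n → L} (hv : v ≠ 0) (hAv : A.map f *ᵥ v = 0) :
    ∃ x, x ≠ 0 ∧ A *ᵥ x = 0 := by
  rw [exists_mulVec_eq_zero_iff, ← map_eq_zero f, f.map_det]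
  exact exists_mulVec_eq_zero_iff.mp ⟨v, hv, hAv⟩

theorem col_ne_zero_of_isUnit [Field 𝕜] {U : Matrix n n 𝕜} (hU : IsUnit U) (j : n) :
    U.col j ≠ 0 := by
  rw [← mulVec_single_one]
  exact ((mulVec_injective_iff_isUnit.mpr hU).ne_iff' (mulVec_zero U)).mpr (by simp)

theorem mulVec_col_inl_eq_zero_of_inv_mul_mul_eq_fromBlocks {m : Type*} [Fintype m]
    [DecidableEq m] [Field 𝕜] {A U : Matrix (m ⊕ n) (m ⊕ n) 𝕜} (hU : IsUnit U)
    {J : Matrix n n 𝕜} (h : U⁻¹ * A * U = fromBlocks 0 0 0 J) (k : m) :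
    A *ᵥ U.col (Sum.inl k) = 0 := by
  have hAU : A * U = U * fromBlocks 0 0 0 J := by
    rw [← h, ← Matrix.mul_assoc, ← Matrix.mul_assoc,
      mul_nonsing_inv _ ((isUnit_iff_isUnit_det U).mp hU), Matrix.one_mul]
  have hcol : (fromBlocks 0 0 0 J : Matrix (m ⊕ n) (m ⊕ n) 𝕜).col (Sum.inl k) = 0 := by
    ext (a | b) <;> simp
  rw [← mulVec_single_one, mulVec_mulVec, hAU, ← mulVec_mulVec, mulVec_single_one, hcol,
    mulVec_zero]

end Matrix

theorem stmt_5_general (ξ K : ℕ)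
    (L : Matrix (Fin (ξ + 1) ⊕ Fin K) (Fin (ξ + 1) ⊕ Fin K) ℝ)
    (U : Matrix (Fin (ξ + 1) ⊕ Fin K) (Fin (ξ + 1) ⊕ Fin K) ℂ)
    (hU : IsUnit U)
    (J : Matrix (Fin K) (Fin K) ℂ)
    (hblock : U⁻¹ * (L.map (algebraMap ℝ ℂ)) * U = Matrix.fromBlocks 0 0 0 J)
    (vr vl : Fin ξ → (Fin (ξ + 1) ⊕ Fin K) → ℝ)
    (hvl : ∀ i j, (vl i j : ℂ) = U⁻¹ (Sum.inl (Fin.castSucc i)) j)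
    (α : Fin ξ → ℝ) :
    (∃ x : (Fin (ξ + 1) ⊕ Fin K) → ℝ, x ≠ 0 ∧
        (L + ∑ i : Fin ξ, α i • Matrix.vecMulVec (vr i) (vl i)) *ᵥ x = 0) ∧
    (∀ Q : Matrix (Fin (ξ + 1) ⊕ Fin K) (Fin (ξ + 1) ⊕ Fin K) ℝ, Q.PosDef →
        ¬ ∃ P : Matrix (Fin (ξ + 1) ⊕ Fin K) (Fin (ξ + 1) ⊕ Fin K) ℝ,
          P * L + Lᵀ * P =
            Q - ∑ i : Fin ξ, α i •
              (P * Matrix.vecMulVec (vr i) (vl i) + Matrix.vecMulVec (vl i) (vr i) * P)) := by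
  set u := U.col (Sum.inl (Fin.last ξ))
  have hu : u ≠ 0 := col_ne_zero_of_isUnit hU _
  have hLu : L.map (algebraMap ℝ ℂ) *ᵥ u = 0 :=
    mulVec_col_inl_eq_zero_of_inv_mul_mul_eq_fromBlocks hU hblock _
  have hvlu : ∀ i, (algebraMap ℝ ℂ ∘ vl i) ⬝ᵥ u = 0 := fun i => by
    have hUU := congrFun₂ (nonsing_inv_mul U ((isUnit_iff_isUnit_det U).mp hU))
      (Sum.inl i.castSucc) (Sum.inl (Fin.last ξ))
    rw [mul_apply', one_apply_ne (by simp [Fin.castSucc_ne_last])] at hUU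
    rwa [show algebraMap ℝ ℂ ∘ vl i = U⁻¹ (Sum.inl i.castSucc) from funext (hvl i)]
  have hker : ∃ x, x ≠ 0 ∧ (L + ∑ i, α i • vecMulVec (vr i) (vl i)) *ᵥ x = 0 := by
    refine exists_mulVec_eq_zero_of_map (algebraMap ℝ ℂ) hu ?_
    rw [map_add_sum_smul_vecMulVec]
    exact add_sum_smul_vecMulVec_mulVec_eq_zero _ _ _ hLu hvlu
  refine ⟨hker, fun Q hQ ⟨P, hP⟩ => ?_⟩
  obtain ⟨x, hx, hRx⟩ := hker
  rw [mul_add_transpose_mul_eq_sub_iff, ← conjTranspose_eq_transpose_of_trivial] at hP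
  exact mul_add_conjTranspose_mul_ne_of_mulVec_eq_zero hQ hx hRx P hP

/-- Converse direction: if `L` (real, `M×M` with `M = (ξ+1) + K`) is similar over `ℂ` to
`diag(0_{ξ+1}, J)`, and for `i ≤ ξ` the vectors `v_{rᵢ}` (resp. `v_{lᵢ}ᵀ`) are the (real)
`i`-th columns of `U` (resp. rows of `U⁻¹`), then `R = L + ∑ αᵢ v_{rᵢ} v_{lᵢ}ᵀ` is singular,
and for every symmetric positive definite `Q` the modified Lyapunov equation has no
solution `P`. -/
theorem stmt_5 (ξ K : ℕ)
    (L : Matrix (Fin (ξ + 1) ⊕ Fin K) (Fin (ξ + 1) ⊕ Fin K) ℝ)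
    (U : Matrix (Fin (ξ + 1) ⊕ Fin K) (Fin (ξ + 1) ⊕ Fin K) ℂ)
    (hU : IsUnit U)
    (J : Matrix (Fin K) (Fin K) ℂ)
    (hblock : U⁻¹ * (L.map (algebraMap ℝ ℂ)) * U = Matrix.fromBlocks 0 0 0 J)
    (vr vl : Fin ξ → (Fin (ξ + 1) ⊕ Fin K) → ℝ)
    (hvr : ∀ i j, (vr i j : ℂ) = U j (Sum.inl (Fin.castSucc i)))
    (hvl : ∀ i j, (vl i j : ℂ) = U⁻¹ (Sum.inl (Fin.castSucc i)) j)
    (α : Fin ξ → ℝ) (hα : ∀ i, 0 < α i) :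
    (∃ x : (Fin (ξ + 1) ⊕ Fin K) → ℝ, x ≠ 0 ∧
        (L + ∑ i : Fin ξ, α i • Matrix.vecMulVec (vr i) (vl i)) *ᵥ x = 0) ∧
    (∀ Q : Matrix (Fin (ξ + 1) ⊕ Fin K) (Fin (ξ + 1) ⊕ Fin K) ℝ, Q.PosDef →
        ¬ ∃ P : Matrix (Fin (ξ + 1) ⊕ Fin K) (Fin (ξ + 1) ⊕ Fin K) ℝ,
          P * L + Lᵀ * P =
            Q - ∑ i : Fin ξ, α i •
              (P * Matrix.vecMulVec (vr i) (vl i) + Matrix.vecMulVec (vl i) (vr i) * P)) :=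
  stmt_5_general ξ K L U hU J hblock vr vl hvl α
end

section
/- Let L be a real M×M matrix, E a real N×M matrix, and suppose the vectors v_{r₁},…,v_{r_ξ}, v_{l₁},…,v_{l_ξ} ∈ ℝ^M are partitioned so that indices 1,…,2(ξ−γ) come in Jordan-chain pairs and indices 2(ξ−γ)+1,…,ξ are genuine eigenvectors, with: L·v_{r_{2i−1}} = 0, L·v_{r_{2i}} = v_{r_{2i−1}}, v_{l_{2i}}ᵀ·L = 0, v_{l_{2i−1}}ᵀ·L = v_{l_{2i}}ᵀ, and v_{l_{2i}}ᵀ·Eᵀ = 0 for each chain pair i ≤ ξ−γ; and L·v_{rᵢ} = 0, v_{lᵢ}ᵀ·L = 0 for each remaining index i. Then for every x ∈ ℝ^N, writing e := Eᵀ·x, it holds that (I − Σᵢ₌₁^ξ v_{rᵢ}·v_{lᵢ}ᵀ)·L·e = L·(I − Σᵢ₌₁^ξ v_{rᵢ}·v_{lᵢ}ᵀ)·e = L·e. -/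
open Matrix

lemma sum_mulVec' {k M : ℕ} (A : Fin k → Matrix (Fin M) (Fin M) ℝ) (v : Fin M → ℝ) :
    (∑ i, A i) *ᵥ v = ∑ i, A i *ᵥ v := by
  ext j
  simp only [Matrix.mulVec, dotProduct, Matrix.sum_apply, Finset.sum_apply, Finset.sum_mul]
  rw [Finset.sum_comm]

lemma mulVec_sum' {k M : ℕ} (L : Matrix (Fin M) (Fin M) ℝ) (f : Fin k → Fin M → ℝ) :
    L *ᵥ (∑ i, f i) = ∑ i, L *ᵥ f i :=
  map_sum (Matrix.mulVecLin L) f Finset.univ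

lemma vecMulVec_mulVec' {M : ℕ} (w v u : Fin M → ℝ) :
    Matrix.vecMulVec w v *ᵥ u = (v ⬝ᵥ u) • w := by
  ext i
  simp only [Matrix.vecMulVec_apply, Matrix.mulVec, dotProduct, Pi.smul_apply,
    smul_eq_mul, Finset.sum_mul, Finset.mul_sum]
  exact Finset.sum_congr rfl fun j _ => by ring

/-- Case `ξ > γ` (Jordan chains of length two at the zero eigenvalue).  The `ξ` pairs of
generalized eigenvectors consist of `c = ξ − γ` Jordan-chain pairs (indices `2i−1, 2i`,
here `vr₁ i, vr₂ i` and `vl₁ i, vl₂ i`) together with `s = ξ − 2c` genuine eigenvector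
pairs (`wr j, wl j`), so that `ξ = 2c + s`.  Under the chain relations
`L v_{r_{2i−1}} = 0`, `L v_{r_{2i}} = v_{r_{2i−1}}`, `v_{l_{2i}}ᵀ L = 0`,
`v_{l_{2i−1}}ᵀ L = v_{l_{2i}}ᵀ`, `v_{l_{2i}}ᵀ Eᵀ = 0`, and `L w_{rⱼ} = 0`, `w_{lⱼ}ᵀ L = 0`,
for every `x` and `e = Eᵀ x`, the projection `I − ∑ v_{rᵢ} v_{lᵢ}ᵀ` satisfies
`(I − ∑ v_r v_lᵀ) L e = L (I − ∑ v_r v_lᵀ) e = L e`. -/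
theorem stmt_9 (N M c s : ℕ)
    (L : Matrix (Fin M) (Fin M) ℝ)
    (E : Matrix (Fin N) (Fin M) ℝ)
    (vr1 vr2 vl1 vl2 : Fin c → Fin M → ℝ)
    (wr wl : Fin s → Fin M → ℝ)
    (hvr1 : ∀ i, L *ᵥ vr1 i = 0)
    (hvr2 : ∀ i, L *ᵥ vr2 i = vr1 i)
    (hvl2 : ∀ i, vl2 i ᵥ* L = 0)
    (hvl1 : ∀ i, vl1 i ᵥ* L = vl2 i)
    (hvl2E : ∀ i, vl2 i ᵥ* Eᵀ = 0)
    (hwr : ∀ j, L *ᵥ wr j = 0)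
    (hwl : ∀ j, wl j ᵥ* L = 0) :
    ∀ x : Fin N → ℝ,
      ((1 : Matrix (Fin M) (Fin M) ℝ) -
          (∑ i : Fin c, (Matrix.vecMulVec (vr1 i) (vl1 i) + Matrix.vecMulVec (vr2 i) (vl2 i)) +
            ∑ j : Fin s, Matrix.vecMulVec (wr j) (wl j))) *ᵥ (L *ᵥ (Eᵀ *ᵥ x)) =
        L *ᵥ (((1 : Matrix (Fin M) (Fin M) ℝ) -
          (∑ i : Fin c, (Matrix.vecMulVec (vr1 i) (vl1 i) + Matrix.vecMulVec (vr2 i) (vl2 i)) +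
            ∑ j : Fin s, Matrix.vecMulVec (wr j) (wl j))) *ᵥ (Eᵀ *ᵥ x)) ∧
      L *ᵥ (((1 : Matrix (Fin M) (Fin M) ℝ) -
          (∑ i : Fin c, (Matrix.vecMulVec (vr1 i) (vl1 i) + Matrix.vecMulVec (vr2 i) (vl2 i)) +
            ∑ j : Fin s, Matrix.vecMulVec (wr j) (wl j))) *ᵥ (Eᵀ *ᵥ x)) =
        L *ᵥ (Eᵀ *ᵥ x) := by
  intro x
  set e := Eᵀ *ᵥ x with he
  have hvl2e : ∀ i, vl2 i ⬝ᵥ e = 0 := fun i => by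
    rw [he, Matrix.dotProduct_mulVec, hvl2E i, zero_dotProduct]
  have h1 : (∑ i : Fin c, (Matrix.vecMulVec (vr1 i) (vl1 i) +
        Matrix.vecMulVec (vr2 i) (vl2 i)) +
        ∑ j : Fin s, Matrix.vecMulVec (wr j) (wl j)) *ᵥ (L *ᵥ e) = 0 := by
    rw [Matrix.add_mulVec, sum_mulVec', sum_mulVec']
    simp only [Matrix.add_mulVec, vecMulVec_mulVec', Matrix.dotProduct_mulVec, hvl1, hvl2,
      hwl, zero_dotProduct, zero_smul, hvl2e, add_zero, Finset.sum_const_zero, zero_add]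
  have h2 : L *ᵥ ((∑ i : Fin c, (Matrix.vecMulVec (vr1 i) (vl1 i) +
        Matrix.vecMulVec (vr2 i) (vl2 i)) +
        ∑ j : Fin s, Matrix.vecMulVec (wr j) (wl j)) *ᵥ e) = 0 := by
    rw [Matrix.add_mulVec, sum_mulVec', sum_mulVec']
    simp only [Matrix.add_mulVec, vecMulVec_mulVec']
    rw [Matrix.mulVec_add, mulVec_sum', mulVec_sum']
    simp only [Matrix.mulVec_add, Matrix.mulVec_smul, hvr1, hvr2, hwr, smul_zero, hvl2e,
      zero_smul, add_zero, zero_add, Finset.sum_const_zero]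
  constructor
  · rw [Matrix.sub_mulVec, Matrix.one_mulVec, h1, sub_zero,
      Matrix.sub_mulVec, Matrix.one_mulVec, Matrix.mulVec_sub, h2, sub_zero]
  · rw [Matrix.sub_mulVec, Matrix.one_mulVec, Matrix.mulVec_sub, h2, sub_zero]
end

section
/- Let L be a real M×M matrix and v_{r₁},…,v_{r_ξ}, v_{l₁},…,v_{l_ξ} ∈ ℝ^M with L·v_{rᵢ} = 0, v_{lᵢ}ᵀ·L = 0, and v_{lᵢ}ᵀ·v_{rⱼ} = δ_{ij} for all i,j ≤ ξ. Let P be a symmetric positive definite real M×M matrix satisfying P·L + Lᵀ·P = I − Σᵢ₌₁^ξ αᵢ·(P·v_{rᵢ}·v_{lᵢ}ᵀ + v_{lᵢ}·v_{rᵢ}ᵀ·P) for some reals αᵢ, let λ_max and λ_min be the largest and smallest eigenvalues of P, and let k₁ > 0. Then for every x₀ ∈ ℝ^M with v_{lᵢ}ᵀ·x₀ = 0 for all i ≤ ξ, the trajectory x(t) := exp(−k₁·t·L)·x₀ satisfies x(t)ᵀ·P·x(t) ≤ e^{−(k₁/λ_max)·t} · x₀ᵀ·P·x₀ for all t ≥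 0, and consequently ‖x(t)‖² ≤ (λ_max/λ_min)·e^{−(k₁/λ_max)·t}·‖x₀‖². -/
/-!
Along `ẋ = -k₁ L x` every left null vector `v_{lᵢ}` of `L` stays orthogonal to `x`, so the
correction terms of the modified Lyapunov equation vanish on `x` and `V = xᵀ P x` satisfies
`V̇ = -k₁ ‖x‖² ≤ -(k₁ / λ_max) V`. Grönwall's inequality gives the decay of `V`, and
`λ_min ‖x‖² ≤ V ≤ λ_max ‖x‖²` transfers it to `‖x‖²`.
-/

open Matrix

section Calculus

variable {𝕜 : Type*} [NontriviallyNormedField 𝕜] {n : Type*} [Fintype n]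

theorem HasDerivAt.dotProduct {u v : 𝕜 → n → 𝕜} {u' v' : n → 𝕜} {t : 𝕜}
    (hu : HasDerivAt u u' t) (hv : HasDerivAt v v' t) :
    HasDerivAt (fun s => u s ⬝ᵥ v s) (u' ⬝ᵥ v t + u t ⬝ᵥ v') t := by
  refine (HasDerivAt.fun_sum (u := Finset.univ) fun i _ =>
    (hasDerivAt_pi.mp hu i).fun_mul (hasDerivAt_pi.mp hv i)).congr_deriv ?_
  exact Finset.sum_add_distrib

theorem HasDerivAt.matrix_mulVec [CompleteSpace 𝕜] (A : Matrix n n 𝕜) {u : 𝕜 → n → 𝕜}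
    {u' : n → 𝕜} {t : 𝕜} (hu : HasDerivAt u u' t) : HasDerivAt (fun s => A *ᵥ u s) (A *ᵥ u') t :=
  (LinearMap.toContinuousLinearMap (mulVecLin A)).hasFDerivAt.comp_hasDerivAt t hu

end Calculus

section Exp

-- Any Banach-algebra norm will do: it only serves to differentiate `NormedSpace.exp`.
attribute [local instance] Matrix.linftyOpNormedAddCommGroup Matrix.linftyOpNormedRing
  Matrix.linftyOpNormedAlgebra

variable {n : Type*} [Fintype n] [DecidableEq n]

theorem hasDerivAt_exp_smul_mulVec (A : Matrix n n ℝ) (v : n → ℝ) (t : ℝ) :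
    HasDerivAt (fun s : ℝ => NormedSpace.exp (s • A) *ᵥ v)
      (A *ᵥ (NormedSpace.exp (t • A) *ᵥ v)) t := by
  let evalAt : Matrix n n ℝ →L[ℝ] n → ℝ :=
    LinearMap.toContinuousLinearMap (LinearMap.applyₗ v ∘ₗ toLin'.toLinearMap)
  refine (evalAt.hasFDerivAt.comp_hasDerivAt t
    (hasDerivAt_exp_smul_const' (𝕂 := ℝ) A t)).congr_deriv ?_
  exact (mulVec_mulVec _ _ _).symm

theorem dotProduct_exp_smul_mulVec_of_vecMul_eq_zero {A : Matrix n n ℝ} {w : n → ℝ} (hw : w ᵥ* A = 0) (v : n → ℝ) (t : ℝ) :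
    w ⬝ᵥ (NormedSpace.exp (t • A) *ᵥ v) = w ⬝ᵥ v := by
  have hderiv (s : ℝ) : HasDerivAt (fun s : ℝ => w ⬝ᵥ (NormedSpace.exp (s • A) *ᵥ v)) 0 s := by
    refine ((hasDerivAt_const s w).dotProduct (hasDerivAt_exp_smul_mulVec A v s)).congr_deriv ?_
    rw [zero_dotProduct, zero_add, dotProduct_mulVec, hw, zero_dotProduct]
  simpa using is_const_of_deriv_eq_zero (fun s => (hderiv s).differentiableAt)
    (fun s => (hderiv s).deriv) t 0

end Exp

theorem le_exp_mul_mul_of_hasDerivAt_le_mul {f f' : ℝ → ℝ} {K : ℝ}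
    (hf : ∀ s, HasDerivAt f (f' s) s) (bound : ∀ s, f' s ≤ K * f s) {t : ℝ} (ht : 0 ≤ t) :
    f t ≤ Real.exp (K * t) * f 0 := by
  have := le_gronwallBound_of_liminf_deriv_right_le (ε := 0) (a := 0) (b := t)
    (fun s _ => (hf s).continuousAt.continuousWithinAt)
    (fun s _ r hr => (hf s).hasDerivWithinAt.liminf_right_slope_le hr) le_rfl
    (fun s _ => by simpa using bound s) t ⟨ht, le_rfl⟩
  rwa [gronwallBound_ε0, sub_zero, mul_comm] at this

section Lyapunov

variable {m : Type*} [Fintype m] {R : Type*} [CommRing R]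

theorem dotProduct_mul_vecMulVec_add_vecMulVec_mul_mulVec_eq_zero (P : Matrix m m R)
    (a : m → R) {b x : m → R} (hx : b ⬝ᵥ x = 0) :
    x ⬝ᵥ (P * vecMulVec a b + vecMulVec b a * P) *ᵥ x = 0 := by
  rw [add_mulVec, ← mulVec_mulVec, ← mulVec_mulVec, vecMulVec_mulVec, vecMulVec_mulVec, hx,
    dotProduct_add]
  simp [dotProduct_comm x b, hx]

theorem mulVec_dotProduct_mulVec_add_dotProduct_mulVec_mulVec_eq_dotProduct_self
    [DecidableEq m] {ι : Type*} [Fintype ι] {L P : Matrix m m R} {vr vl : ι → m → R} {α : ι → R}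
    (hLyap : P * L + Lᵀ * P =
      1 - ∑ i, α i • (P * vecMulVec (vr i) (vl i) + vecMulVec (vl i) (vr i) * P))
    {x : m → R} (hx : ∀ i, vl i ⬝ᵥ x = 0) :
    (L *ᵥ x) ⬝ᵥ P *ᵥ x + x ⬝ᵥ P *ᵥ (L *ᵥ x) = x ⬝ᵥ x := by
  calc (L *ᵥ x) ⬝ᵥ P *ᵥ x + x ⬝ᵥ P *ᵥ (L *ᵥ x) = x ⬝ᵥ (P * L + Lᵀ * P) *ᵥ x := by
        rw [add_mulVec, dotProduct_add, add_comm, ← mulVec_mulVec, ← mulVec_mulVec,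
          dotProduct_mulVec x Lᵀ, vecMul_transpose, mulVec_mulVec]
    _ = x ⬝ᵥ x := by
        rw [hLyap, sub_mulVec, one_mulVec, dotProduct_sub, sum_mulVec, dotProduct_sum,
          Finset.sum_eq_zero fun i _ => ?_, sub_zero]
        rw [smul_mulVec, dotProduct_smul,
          dotProduct_mul_vecMulVec_add_vecMulVec_mul_mulVec_eq_zero _ _ (hx i), smul_zero]

end Lyapunov

namespace Matrix

section Rayleigh

open scoped MatrixOrder

variable {n : Type*} [Fintype n] [DecidableEq n] {A : Matrix n n ℝ}

theorem IsHermitian.dotProduct_mulVec_le (hA : A.IsHermitian) {b : ℝ}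
    (hb : ∀ i, hA.eigenvalues i ≤ b) (x : n → ℝ) : x ⬝ᵥ A *ᵥ x ≤ b * (x ⬝ᵥ x) := by
  have hle : A ≤ algebraMap ℝ _ b := le_algebraMap_of_spectrum_le
    (by rw [hA.spectrum_real_eq_range_eigenvalues]; rintro _ ⟨i, rfl⟩; exact hb i) hA
  have := (le_iff.mp hle).dotProduct_mulVec_nonneg x
  simpa [Algebra.algebraMap_eq_smul_one, sub_mulVec, smul_mulVec, dotProduct_sub, sub_nonneg]
    using this

theorem IsHermitian.le_dotProduct_mulVec (hA : A.IsHermitian) {a : ℝ}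
    (ha : ∀ i, a ≤ hA.eigenvalues i) (x : n → ℝ) : a * (x ⬝ᵥ x) ≤ x ⬝ᵥ A *ᵥ x := by
  have hle : algebraMap ℝ _ a ≤ A := algebraMap_le_of_le_spectrum
    (by rw [hA.spectrum_real_eq_range_eigenvalues]; rintro _ ⟨i, rfl⟩; exact ha i) hA
  have := (le_iff.mp hle).dotProduct_mulVec_nonneg x
  simpa [Algebra.algebraMap_eq_smul_one, sub_mulVec, smul_mulVec, dotProduct_sub, sub_nonneg]
    using this

end Rayleigh

end Matrix

theorem stmt_11_general (M ξ : ℕ) (L : Matrix (Fin M) (Fin M) ℝ)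
    (vr vl : Fin ξ → Fin M → ℝ)
    (hvl : ∀ i, vl i ᵥ* L = 0)
    (P : Matrix (Fin M) (Fin M) ℝ) (hP : P.PosDef)
    (α : Fin ξ → ℝ)
    (hLyap : P * L + Lᵀ * P =
      (1 : Matrix (Fin M) (Fin M) ℝ) - ∑ i : Fin ξ, α i •
        (P * Matrix.vecMulVec (vr i) (vl i) + Matrix.vecMulVec (vl i) (vr i) * P))
    (lmax lmin : ℝ)
    (hmax : IsGreatest (Set.range hP.1.eigenvalues) lmax)
    (hmin : IsLeast (Set.range hP.1.eigenvalues) lmin)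
    (k₁ : ℝ) (hk₁ : 0 < k₁) :
    ∀ x₀ : Fin M → ℝ, (∀ i, vl i ⬝ᵥ x₀ = 0) →
      ∀ t : ℝ, 0 ≤ t →
        (NormedSpace.exp (-(k₁ * t) • L) *ᵥ x₀) ⬝ᵥ
            (P *ᵥ (NormedSpace.exp (-(k₁ * t) • L) *ᵥ x₀)) ≤
          Real.exp (-(k₁ / lmax) * t) * (x₀ ⬝ᵥ (P *ᵥ x₀)) ∧
        (NormedSpace.exp (-(k₁ * t) • L) *ᵥ x₀) ⬝ᵥ
            (NormedSpace.exp (-(k₁ * t) • L) *ᵥ x₀) ≤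
          (lmax / lmin) * Real.exp (-(k₁ / lmax) * t) * (x₀ ⬝ᵥ x₀) := by
  intro x₀ hx₀ t ht
  set x : ℝ → Fin M → ℝ := fun s => NormedSpace.exp (-(k₁ * s) • L) *ᵥ x₀
  have hub (i : Fin M) : hP.1.eigenvalues i ≤ lmax := hmax.2 ⟨i, rfl⟩
  have hlb (i : Fin M) : lmin ≤ hP.1.eigenvalues i := hmin.2 ⟨i, rfl⟩
  have hlmax : 0 < lmax := by obtain ⟨i, rfl⟩ := hmax.1; exact hP.eigenvalues_pos i
  have hlmin : 0 < lmin := by obtain ⟨i, rfl⟩ := hmin.1; exact hP.eigenvalues_pos i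
  have hx' (s : ℝ) : HasDerivAt x ((-k₁) • (L *ᵥ x s)) s := by
    refine ((hasDerivAt_exp_smul_mulVec L x₀ (-(k₁ * s))).scomp s
      ((hasDerivAt_id s).const_mul k₁).neg).congr_deriv ?_
    rw [mul_one, neg_smul, neg_smul]
  have horth (s : ℝ) (i : Fin ξ) : vl i ⬝ᵥ x s = 0 :=
    (dotProduct_exp_smul_mulVec_of_vecMul_eq_zero (hvl i) x₀ _).trans (hx₀ i)
  have hV' (s : ℝ) : HasDerivAt (fun s => x s ⬝ᵥ P *ᵥ x s) (-k₁ * (x s ⬝ᵥ x s)) s := by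
    refine ((hx' s).dotProduct ((hx' s).matrix_mulVec P)).congr_deriv ?_
    rw [mulVec_smul, smul_dotProduct, dotProduct_smul, ← smul_add,
      mulVec_dotProduct_mulVec_add_dotProduct_mulVec_mulVec_eq_dotProduct_self hLyap (horth s),
      smul_eq_mul]
  have hdecay : x t ⬝ᵥ P *ᵥ x t ≤ Real.exp (-(k₁ / lmax) * t) * (x₀ ⬝ᵥ P *ᵥ x₀) := by
    refine (le_exp_mul_mul_of_hasDerivAt_le_mul (K := -(k₁ / lmax)) hV' (fun s => ?_) ht).trans_eq
      (by simp [x])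
    have := mul_le_mul_of_nonneg_left (hP.1.dotProduct_mulVec_le hub (x s))
      (div_nonneg hk₁.le hlmax.le)
    rw [← mul_assoc, div_mul_cancel₀ _ hlmax.ne'] at this
    linarith
  refine ⟨hdecay, ?_⟩
  rw [mul_assoc, div_mul_eq_mul_div, le_div_iff₀ hlmin, mul_comm]
  calc lmin * (x t ⬝ᵥ x t) ≤ x t ⬝ᵥ P *ᵥ x t := hP.1.le_dotProduct_mulVec hlb _
    _ ≤ Real.exp (-(k₁ / lmax) * t) * (x₀ ⬝ᵥ P *ᵥ x₀) := hdecay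
    _ ≤ Real.exp (-(k₁ / lmax) * t) * (lmax * (x₀ ⬝ᵥ x₀)) := by
        gcongr; exact hP.1.dotProduct_mulVec_le hub _
    _ = lmax * (Real.exp (-(k₁ / lmax) * t) * (x₀ ⬝ᵥ x₀)) := by ring

/-- Within-mode exponential decay: if `P` is symmetric positive definite and solves the
modified Lyapunov equation with `Q = I`, and `x₀` is orthogonal to all left null vectors
`v_{lᵢ}` of `L`, then along `x(t) = exp(−k₁ t L) x₀` the Lyapunov quadratic form decays as
`x(t)ᵀ P x(t) ≤ e^{−(k₁/λmax) t} x₀ᵀ P x₀`, and hence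
`‖x(t)‖² ≤ (λmax/λmin) e^{−(k₁/λmax) t} ‖x₀‖²` (Euclidean norms, written via dot
products). -/
theorem stmt_11 (M ξ : ℕ) (L : Matrix (Fin M) (Fin M) ℝ)
    (vr vl : Fin ξ → Fin M → ℝ)
    (hvr : ∀ i, L *ᵥ vr i = 0)
    (hvl : ∀ i, vl i ᵥ* L = 0)
    (hbiorth : ∀ i j, vl i ⬝ᵥ vr j = if i = j then (1 : ℝ) else 0)
    (P : Matrix (Fin M) (Fin M) ℝ) (hP : P.PosDef)
    (α : Fin ξ → ℝ)
    (hLyap : P * L + Lᵀ * P =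
      (1 : Matrix (Fin M) (Fin M) ℝ) - ∑ i : Fin ξ, α i •
        (P * Matrix.vecMulVec (vr i) (vl i) + Matrix.vecMulVec (vl i) (vr i) * P))
    (lmax lmin : ℝ)
    (hmax : IsGreatest (Set.range hP.1.eigenvalues) lmax)
    (hmin : IsLeast (Set.range hP.1.eigenvalues) lmin)
    (k₁ : ℝ) (hk₁ : 0 < k₁) :
    ∀ x₀ : Fin M → ℝ, (∀ i, vl i ⬝ᵥ x₀ = 0) →
      ∀ t : ℝ, 0 ≤ t →
        (NormedSpace.exp (-(k₁ * t) • L) *ᵥ x₀) ⬝ᵥ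
            (P *ᵥ (NormedSpace.exp (-(k₁ * t) • L) *ᵥ x₀)) ≤
          Real.exp (-(k₁ / lmax) * t) * (x₀ ⬝ᵥ (P *ᵥ x₀)) ∧
        (NormedSpace.exp (-(k₁ * t) • L) *ᵥ x₀) ⬝ᵥ
            (NormedSpace.exp (-(k₁ * t) • L) *ᵥ x₀) ≤
          (lmax / lmin) * Real.exp (-(k₁ / lmax) * t) * (x₀ ⬝ᵥ x₀) :=
  stmt_11_general M ξ L vr vl hvl P hP α hLyap lmax lmin hmax hmin k₁ hk₁
end
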